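/- arXiv:2605.29267 — 5 statements merged into one kernel-verified Lean document; each statement's English description precedes it below -/
import Mathlib

section
/- Let A, D be square matrices (possibly of different sizes) and B, C rectangular matrices of compatible shapes. Suppose A ⪰ αI and D ⪰ δI in the sense that v^T A v ≥ α‖v‖² and w^T D w ≥ δ‖w‖² for all v, w (A, D not necessarily symmetric), with α, δ > 0, and suppose ‖B‖ ≤ b and ‖C‖ ≤ c in operator norm with bc/δ < α. Then the Schur-type complement S = A - B D^{-1} C satisfies v^T S v ≥ (α - bc/δ)‖v‖² for all v; in particular S is invertible. -/
open Matrix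

private lemma dot_cs {k : ℕ} (u w : Fin k → ℝ) :
    (u ⬝ᵥ w) ^ 2 ≤ (u ⬝ᵥ u) * (w ⬝ᵥ w) := by
  simpa [dotProduct, sq] using
    Finset.sum_mul_sq_le_sq_mul_sq Finset.univ u w

private lemma dot_self_nonneg {k : ℕ} (u : Fin k → ℝ) : 0 ≤ u ⬝ᵥ u :=
  Finset.sum_nonneg fun _ _ => mul_self_nonneg _

/-- Schur-type complement bound: if `A ⪰ αI`, `D ⪰ δI` (in the non-symmetric
quadratic-form sense), `‖B‖ ≤ b`, `‖C‖ ≤ c` (Euclidean operator norms, stated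
via squared norms), and `b*c/δ < α`, then `S = A - B D⁻¹ C` satisfies
`vᵀ S v ≥ (α - b*c/δ)‖v‖²` for all `v`; in particular `S` is invertible. -/
theorem schur_complement_positive
    {m n : ℕ} (A : Matrix (Fin m) (Fin m) ℝ) (D : Matrix (Fin n) (Fin n) ℝ)
    (B : Matrix (Fin m) (Fin n) ℝ) (C : Matrix (Fin n) (Fin m) ℝ)
    (α δ b c : ℝ) (hα : 0 < α) (hδ : 0 < δ) (hb : 0 ≤ b) (hc : 0 ≤ c)
    (hA : ∀ v : Fin m → ℝ, α * (v ⬝ᵥ v) ≤ v ⬝ᵥ A.mulVec v)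
    (hD : ∀ w : Fin n → ℝ, δ * (w ⬝ᵥ w) ≤ w ⬝ᵥ D.mulVec w)
    (hB : ∀ w : Fin n → ℝ, (B.mulVec w) ⬝ᵥ (B.mulVec w) ≤ b ^ 2 * (w ⬝ᵥ w))
    (hC : ∀ v : Fin m → ℝ, (C.mulVec v) ⬝ᵥ (C.mulVec v) ≤ c ^ 2 * (v ⬝ᵥ v))
    (hbc : b * c / δ < α) :
    (∀ v : Fin m → ℝ,
        (α - b * c / δ) * (v ⬝ᵥ v) ≤ v ⬝ᵥ (A - B * D⁻¹ * C).mulVec v) ∧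
      IsUnit (A - B * D⁻¹ * C).det := by
  -- D is invertible
  have hDdet : IsUnit D.det := by
    by_contra h
    rw [isUnit_iff_ne_zero, not_not, ← Matrix.exists_mulVec_eq_zero_iff] at h
    obtain ⟨w, hw0, hw⟩ := h
    have h1 := hD w
    rw [hw] at h1
    simp only [dotProduct_zero] at h1
    have h2 : w ⬝ᵥ w = 0 := by nlinarith [dot_self_nonneg w]
    exact hw0 (dotProduct_self_eq_zero.mp h2)
  have hDinv : D * D⁻¹ = 1 := Matrix.mul_nonsing_inv D hDdet
  -- main quadratic form bound
  have main : ∀ v : Fin m → ℝ,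
      (α - b * c / δ) * (v ⬝ᵥ v) ≤ v ⬝ᵥ (A - B * D⁻¹ * C).mulVec v := by
    intro v
    set w : Fin n → ℝ := D⁻¹.mulVec (C.mulVec v) with hwdef
    have hDw : D.mulVec w = C.mulVec v := by
      rw [hwdef, Matrix.mulVec_mulVec, hDinv, Matrix.one_mulVec]
    have hSv : (A - B * D⁻¹ * C).mulVec v = A.mulVec v - B.mulVec w := by
      rw [Matrix.sub_mulVec, ← Matrix.mulVec_mulVec, ← Matrix.mulVec_mulVec]
    have key : v ⬝ᵥ B.mulVec w ≤ b * c / δ * (v ⬝ᵥ v) := by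
      rcases eq_or_ne (w ⬝ᵥ w) 0 with hww | hww
      · have : w = 0 := dotProduct_self_eq_zero.mp hww
        rw [this]
        simp only [Matrix.mulVec_zero, dotProduct_zero]
        exact mul_nonneg (by positivity) (dot_self_nonneg v)
      · have hwpos : 0 < w ⬝ᵥ w := lt_of_le_of_ne (dot_self_nonneg w) (Ne.symm hww)
        -- δ ‖w‖² ≤ w ⬝ᵥ D w = w ⬝ᵥ C v, and (w ⬝ᵥ C v)² ≤ ‖w‖² c² ‖v‖²
        have h1 : δ * (w ⬝ᵥ w) ≤ w ⬝ᵥ C.mulVec v := by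
          have := hD w; rwa [hDw] at this
        have h2 : (w ⬝ᵥ C.mulVec v) ^ 2 ≤ (w ⬝ᵥ w) * (c ^ 2 * (v ⬝ᵥ v)) :=
          le_trans (dot_cs w (C.mulVec v))
            (by have := hC v; nlinarith [dot_self_nonneg w])
        have hwbound : δ ^ 2 * (w ⬝ᵥ w) ≤ c ^ 2 * (v ⬝ᵥ v) := by
          have hq : (δ * (w ⬝ᵥ w)) ^ 2 ≤ (w ⬝ᵥ C.mulVec v) ^ 2 := by
            have h0 : 0 ≤ δ * (w ⬝ᵥ w) := by positivity
            nlinarith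
          nlinarith
        have h3 : (v ⬝ᵥ B.mulVec w) ^ 2 ≤ (v ⬝ᵥ v) * (b ^ 2 * (w ⬝ᵥ w)) :=
          le_trans (dot_cs v (B.mulVec w))
            (by have := hB w; nlinarith [dot_self_nonneg v])
        have h4 : (v ⬝ᵥ B.mulVec w) ^ 2 ≤ (b * c / δ * (v ⬝ᵥ v)) ^ 2 := by
          have hδ2 : (0:ℝ) < δ ^ 2 := by positivity
          rw [div_mul_eq_mul_div, div_pow, le_div_iff₀ hδ2]
          nlinarith [mul_le_mul_of_nonneg_left hwbound
              (mul_nonneg (sq_nonneg b) (dot_self_nonneg v)),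
            mul_le_mul_of_nonneg_right h3 (sq_nonneg δ)]
        have h5 : 0 ≤ b * c / δ * (v ⬝ᵥ v) :=
          mul_nonneg (by positivity) (dot_self_nonneg v)
        nlinarith
    calc (α - b * c / δ) * (v ⬝ᵥ v)
        = α * (v ⬝ᵥ v) - b * c / δ * (v ⬝ᵥ v) := by ring
      _ ≤ v ⬝ᵥ A.mulVec v - v ⬝ᵥ B.mulVec w := by
          have := hA v; linarith [key]
      _ = v ⬝ᵥ (A - B * D⁻¹ * C).mulVec v := by
          rw [hSv, dotProduct_sub]
  refine ⟨main, ?_⟩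
  rw [isUnit_iff_ne_zero]
  intro hdet
  obtain ⟨v, hv0, hv⟩ := (Matrix.exists_mulVec_eq_zero_iff).mpr hdet
  have h1 := main v
  rw [hv] at h1
  simp only [dotProduct_zero] at h1
  have hpos : 0 < α - b * c / δ := by linarith
  have h2 : v ⬝ᵥ v = 0 := by nlinarith [dot_self_nonneg v]
  exact hv0 (dotProduct_self_eq_zero.mp h2)
end

section
/- Let g, h ∈ R^n be nonzero vectors with cosine similarity ρ = ⟨g,h⟩/(‖g‖‖h‖), and let S be a real n×n matrix with ‖S‖ ≤ 1/τ (τ > 0) and v^T S v ≥ m‖v‖² for all v (m > 0). Decompose h = ρ‖h‖ g/‖g‖ + √(1-ρ²)‖h‖ w where w ⊥ g, ‖w‖ = 1 (when ρ² < 1). If ρ > 1/√(1 + m²τ²), then ⟨g, S h⟩ > 0. -/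
open scoped RealInnerProductSpace

/-- If `ρ = cos(g,h)` exceeds `1/√(1+m²τ²)` and the linear map `S` satisfies
`‖S‖ ≤ 1/τ` and `⟪v, S v⟫ ≥ m‖v‖²`, then `⟪g, S h⟫ > 0`. -/
theorem inner_S_pos_of_cosine_large
    {n : ℕ} (g h : EuclideanSpace ℝ (Fin n)) (hg : g ≠ 0) (hh : h ≠ 0)
    (S : EuclideanSpace ℝ (Fin n) →L[ℝ] EuclideanSpace ℝ (Fin n))
    (τ m : ℝ) (hτ : 0 < τ) (hm : 0 < m)
    (hSnorm : ‖S‖ ≤ 1 / τ)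
    (hSpos : ∀ v : EuclideanSpace ℝ (Fin n), m * ‖v‖ ^ 2 ≤ ⟪v, S v⟫)
    (ρ : ℝ) (hρ : ρ = ⟪g, h⟫ / (‖g‖ * ‖h‖))
    (hlarge : ρ > 1 / Real.sqrt (1 + m ^ 2 * τ ^ 2)) :
    0 < ⟪g, S h⟫ := by
  have hg0 : (0:ℝ) < ‖g‖ := norm_pos_iff.mpr hg
  have hh0 : (0:ℝ) < ‖h‖ := norm_pos_iff.mpr hh
  have hsq : (0:ℝ) < 1 + m ^ 2 * τ ^ 2 := by positivity
  have hρ0 : 0 < ρ := lt_trans (by positivity) hlarge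
  -- key algebraic consequence of hlarge
  have hρsq : 1 - ρ ^ 2 < ρ ^ 2 * (m ^ 2 * τ ^ 2) := by
    have h2 : (1 / Real.sqrt (1 + m ^ 2 * τ ^ 2)) ^ 2 < ρ ^ 2 :=
      pow_lt_pow_left₀ hlarge (by positivity) (by norm_num)
    have h3 : (1 / Real.sqrt (1 + m ^ 2 * τ ^ 2)) ^ 2 = 1 / (1 + m ^ 2 * τ ^ 2) := by
      rw [div_pow, one_pow, Real.sq_sqrt hsq.le]
    rw [h3, div_lt_iff₀ hsq] at h2
    nlinarith
  have hgh : ⟪g, h⟫ = ρ * (‖g‖ * ‖h‖) := by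
    rw [hρ, div_mul_cancel₀]
    positivity
  set a : ℝ := ρ * ‖h‖ / ‖g‖ with ha
  set w : EuclideanSpace ℝ (Fin n) := h - a • g with hw
  have hgg : ⟪g, g⟫ = ‖g‖ ^ 2 := real_inner_self_eq_norm_sq g
  have hgw : ⟪g, w⟫ = 0 := by
    rw [hw, inner_sub_right, real_inner_smul_right, hgg, hgh, ha]
    field_simp
    ring
  have hdecomp : h = a • g + w := by rw [hw]; abel
  have hw2 : ‖w‖ ^ 2 = ‖h‖ ^ 2 * (1 - ρ ^ 2) := by
    have := norm_add_sq_real (a • g) w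
    rw [← hdecomp, real_inner_smul_left, hgw, norm_smul, Real.norm_eq_abs] at this
    have haabs : |a| = a := abs_of_pos (by rw [ha]; positivity)
    rw [haabs] at this
    have : ‖h‖ ^ 2 = a ^ 2 * ‖g‖ ^ 2 + ‖w‖ ^ 2 := by nlinarith [this]
    have ha2 : a ^ 2 * ‖g‖ ^ 2 = ρ ^ 2 * ‖h‖ ^ 2 := by
      rw [ha]; field_simp
    nlinarith
  -- split the inner product
  have hsplit : ⟪g, S h⟫ = a * ⟪g, S g⟫ + ⟪g, S w⟫ := by
    rw [hdecomp, map_add, map_smul, inner_add_right, real_inner_smul_right]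
  -- bound the w part
  have hbw : |⟪g, S w⟫| ≤ ‖g‖ * (‖w‖ / τ) := by
    calc |⟪g, S w⟫| ≤ ‖g‖ * ‖S w‖ := abs_real_inner_le_norm g (S w)
      _ ≤ ‖g‖ * (‖S‖ * ‖w‖) := by
          exact mul_le_mul_of_nonneg_left (S.le_opNorm w) hg0.le
      _ ≤ ‖g‖ * (‖w‖ / τ) := by
          apply mul_le_mul_of_nonneg_left _ hg0.le
          rw [div_eq_mul_inv ‖w‖, mul_comm ‖w‖]
          apply mul_le_mul_of_nonneg_right _ (norm_nonneg w)
          rw [← one_div]; exact hSnorm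
  -- bound the g part
  have hbg : m * ‖g‖ ^ 2 ≤ ⟪g, S g⟫ := hSpos g
  -- key strict inequality: ‖w‖ < m * τ * ρ * ‖h‖
  have hwlt : ‖w‖ < m * τ * ρ * ‖h‖ := by
    apply lt_of_pow_lt_pow_left₀ 2 (by positivity)
    rw [hw2]
    have key : ‖h‖ ^ 2 * (1 - ρ ^ 2) < ‖h‖ ^ 2 * (ρ ^ 2 * (m ^ 2 * τ ^ 2)) :=
      mul_lt_mul_of_pos_left hρsq (pow_pos hh0 2)
    calc ‖h‖ ^ 2 * (1 - ρ ^ 2) < ‖h‖ ^ 2 * (ρ ^ 2 * (m ^ 2 * τ ^ 2)) := key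
      _ = (m * τ * ρ * ‖h‖) ^ 2 := by ring
  have ha0 : 0 < a := by rw [ha]; positivity
  have hfinal : ‖g‖ * (‖w‖ / τ) < a * (m * ‖g‖ ^ 2) := by
    have : a * (m * ‖g‖ ^ 2) = ‖g‖ * ((m * τ * ρ * ‖h‖) / τ) := by
      rw [ha]; field_simp
    rw [this]
    apply mul_lt_mul_of_pos_left _ hg0
    exact (div_lt_div_iff_of_pos_right hτ).mpr hwlt
  have habs : -(‖g‖ * (‖w‖ / τ)) ≤ ⟪g, S w⟫ := neg_le_of_abs_le hbw
  have : a * (m * ‖g‖ ^ 2) ≤ a * ⟪g, S g⟫ := by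
    exact mul_le_mul_of_nonneg_left hbg ha0.le
  rw [hsplit]
  linarith
end

section
/- Let g, h ∈ R^n be nonzero vectors with cosine similarity ρ = ⟨g,h⟩/(‖g‖‖h‖), and let S be a real n×n matrix with ‖S‖ ≤ 1/τ (τ > 0) and v^T S v ≥ m‖v‖² for all v (m > 0). If ρ < −1/√(1 + m²τ²), then ⟨g, S h⟩ < 0. -/
open scoped RealInnerProductSpace

/-!
Split `h = a • g + w` with `w ⟂ g`, where `a = ⟪g, h⟫ / ‖g‖²` has the sign of `ρ` and
`‖w‖ = √(1 - ρ²) ‖h‖`. Since `a ≤ 0`, coercivity bounds `a ⟪g, S g⟫` by `m ρ ‖g‖ ‖h‖`, and the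
operator norm bounds `⟪g, S w⟫` by `√(1 - ρ²) ‖g‖ ‖h‖ / τ`; the hypothesis on `ρ` is exactly
`√(1 - ρ²) < -m τ ρ`, so the sum is negative.
-/

section

variable {E : Type*} [NormedAddCommGroup E] [InnerProductSpace ℝ E]

lemma norm_sub_inner_div_norm_sq_smul_sq {g : E} (hg : g ≠ 0) (h : E) :
    ‖h - (⟪g, h⟫ / ‖g‖ ^ 2) • g‖ ^ 2 = ‖h‖ ^ 2 - ⟪g, h⟫ ^ 2 / ‖g‖ ^ 2 := by
  have : ‖g‖ ^ 2 ≠ 0 := by positivity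
  rw [norm_sub_sq_real, real_inner_smul_right, norm_smul, mul_pow, Real.norm_eq_abs, sq_abs,
    real_inner_comm]
  field_simp
  ring

lemma inner_apply_le_of_inner_eq_mul_norm_mul_norm (S : E →L[ℝ] E) {m : ℝ}
    (hS : ∀ v, m * ‖v‖ ^ 2 ≤ ⟪v, S v⟫) {g h : E} {ρ : ℝ} (hρ : ρ ≤ 0)
    (hgh : ⟪g, h⟫ = ρ * (‖g‖ * ‖h‖)) :
    ⟪g, S h⟫ ≤ (m * ρ + ‖S‖ * √(1 - ρ ^ 2)) * (‖g‖ * ‖h‖) := by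
  rcases eq_or_ne g 0 with rfl | hg
  · simp
  set a := ⟪g, h⟫ / ‖g‖ ^ 2 with ha_def
  set w := h - a • g
  have ha : a * ‖g‖ ^ 2 = ρ * (‖g‖ * ‖h‖) := by
    rw [ha_def, div_mul_cancel₀ _ (by positivity), hgh]
  have ha_nonpos : a ≤ 0 :=
    div_nonpos_of_nonpos_of_nonneg (hgh ▸ mul_nonpos_of_nonpos_of_nonneg hρ (by positivity))
      (by positivity)
  have hw : ‖w‖ = √(1 - ρ ^ 2) * ‖h‖ := by
    have : ‖w‖ ^ 2 = (1 - ρ ^ 2) * ‖h‖ ^ 2 := by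
      rw [norm_sub_inner_div_norm_sq_smul_sq hg, hgh]
      field_simp
    rw [← Real.sqrt_sq (norm_nonneg w), this, Real.sqrt_mul' _ (sq_nonneg _),
      Real.sqrt_sq (norm_nonneg h)]
  calc ⟪g, S h⟫ = a * ⟪g, S g⟫ + ⟪g, S w⟫ := by
        conv_lhs => rw [← sub_add_cancel h (a • g)]
        rw [map_add, map_smul, inner_add_right, real_inner_smul_right, add_comm]
    _ ≤ a * (m * ‖g‖ ^ 2) + ‖g‖ * (‖S‖ * ‖w‖) :=
        add_le_add (mul_le_mul_of_nonpos_left (hS g) ha_nonpos) <|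
          (real_inner_le_norm _ _).trans <|
            mul_le_mul_of_nonneg_left (S.le_opNorm w) (norm_nonneg g)
    _ = (m * ρ + ‖S‖ * √(1 - ρ ^ 2)) * (‖g‖ * ‖h‖) := by
        rw [hw]
        linear_combination m * ha

end

lemma mul_add_one_div_mul_sqrt_one_sub_sq_neg {m τ ρ : ℝ} (hm : 0 < m) (hτ : 0 < τ)
    (hρ : ρ < -(1 / √(1 + m ^ 2 * τ ^ 2))) :
    m * ρ + 1 / τ * √(1 - ρ ^ 2) < 0 := by
  have hs : 0 < √(1 + m ^ 2 * τ ^ 2) := by positivity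
  have h1 : 1 < -ρ * √(1 + m ^ 2 * τ ^ 2) := by
    rw [← div_lt_iff₀ hs]
    linarith
  have hρ_neg : 0 < -ρ := by
    have := one_div_pos.2 hs
    linarith
  have h2 : 1 < ρ ^ 2 * (1 + m ^ 2 * τ ^ 2) := by
    have := Real.sq_sqrt (by positivity : (0 : ℝ) ≤ 1 + m ^ 2 * τ ^ 2)
    nlinarith
  have h3 : √(1 - ρ ^ 2) < -ρ * m * τ :=
    (Real.sqrt_lt' (by positivity)).2 (by nlinarith)
  have h4 : √(1 - ρ ^ 2) / τ < -ρ * m := by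
    rw [div_lt_iff₀ hτ]
    linarith
  rw [one_div_mul_eq_div]
  linarith

theorem inner_S_neg_of_cosine_small_general
    {n : ℕ} (g h : EuclideanSpace ℝ (Fin n))
    (S : EuclideanSpace ℝ (Fin n) →L[ℝ] EuclideanSpace ℝ (Fin n))
    (τ m : ℝ) (hτ : 0 < τ) (hm : 0 < m)
    (hSnorm : ‖S‖ ≤ 1 / τ)
    (hSpos : ∀ v : EuclideanSpace ℝ (Fin n), m * ‖v‖ ^ 2 ≤ ⟪v, S v⟫)
    (ρ : ℝ) (hρ : ρ = ⟪g, h⟫ / (‖g‖ * ‖h‖))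
    (hsmall : ρ < -(1 / Real.sqrt (1 + m ^ 2 * τ ^ 2))) :
    ⟪g, S h⟫ < 0 := by
  have hρ_neg : ρ < 0 := hsmall.trans (neg_neg_of_pos (by positivity))
  -- Since `ρ ≠ 0`, its denominator cannot be the junk case `‖g‖ * ‖h‖ = 0`.
  have hN : 0 < ‖g‖ * ‖h‖ := by
    refine (mul_nonneg (norm_nonneg g) (norm_nonneg h)).lt_of_ne' fun h0 => ?_
    rw [h0, div_zero] at hρ
    exact hρ_neg.ne hρ
  have hgh : ⟪g, h⟫ = ρ * (‖g‖ * ‖h‖) := by rw [hρ, div_mul_cancel₀ _ hN.ne']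
  calc ⟪g, S h⟫ ≤ (m * ρ + ‖S‖ * √(1 - ρ ^ 2)) * (‖g‖ * ‖h‖) :=
        inner_apply_le_of_inner_eq_mul_norm_mul_norm S hSpos hρ_neg.le hgh
    _ ≤ (m * ρ + 1 / τ * √(1 - ρ ^ 2)) * (‖g‖ * ‖h‖) := by gcongr
    _ < 0 := mul_neg_of_neg_of_pos (mul_add_one_div_mul_sqrt_one_sub_sq_neg hm hτ hsmall) hN

/-- If `ρ = cos(g,h)` is below `-1/√(1+m²τ²)` and the linear map `S` satisfies
`‖S‖ ≤ 1/τ` and `⟪v, S v⟫ ≥ m‖v‖²`, then `⟪g, S h⟫ < 0`. -/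
theorem inner_S_neg_of_cosine_small
    {n : ℕ} (g h : EuclideanSpace ℝ (Fin n)) (hg : g ≠ 0) (hh : h ≠ 0)
    (S : EuclideanSpace ℝ (Fin n) →L[ℝ] EuclideanSpace ℝ (Fin n))
    (τ m : ℝ) (hτ : 0 < τ) (hm : 0 < m)
    (hSnorm : ‖S‖ ≤ 1 / τ)
    (hSpos : ∀ v : EuclideanSpace ℝ (Fin n), m * ‖v‖ ^ 2 ≤ ⟪v, S v⟫)
    (ρ : ℝ) (hρ : ρ = ⟪g, h⟫ / (‖g‖ * ‖h‖))
    (hsmall : ρ < -(1 / Real.sqrt (1 + m ^ 2 * τ ^ 2))) :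
    ⟪g, S h⟫ < 0 :=
  inner_S_neg_of_cosine_small_general g h S τ m hτ hm hSnorm hSpos ρ hρ hsmall
end

section
/- In R², let W1 = I, W2 = (1/7)·[[-9, 6],[6, 3]], a = (1, -1), g = (1, 0). Then: (i) the matrix I − W1 W2 is invertible with inverse S = (I − W2)^{-1}; (ii) the cosine of the angle between g and a equals √2/2 > 0; (iii) ⟨g, S a⟩ = −1/2 < 0. -/
open Matrix

/-- Explicit counterexample in `ℝ²`: with `W1 = I`, `W2 = (1/7)[[-9,6],[6,3]]`,
`a = (1,-1)`, `g = (1,0)`, the matrix `I - W1 W2` is invertible, the cosine of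
the angle between `g` and `a` equals `√2/2 > 0`, yet
`⟨g, (I - W1 W2)⁻¹ a⟩ = -1/2 < 0`. -/
theorem curation_backfire_example :
    let W1 : Matrix (Fin 2) (Fin 2) ℝ := 1
    let W2 : Matrix (Fin 2) (Fin 2) ℝ := ((1 : ℝ) / 7) • !![-9, 6; 6, 3]
    let a : Fin 2 → ℝ := ![1, -1]
    let g : Fin 2 → ℝ := ![1, 0]
    let S : Matrix (Fin 2) (Fin 2) ℝ := (1 - W1 * W2)⁻¹
    IsUnit (1 - W1 * W2).det ∧
      ((g ⬝ᵥ a) / (Real.sqrt (g ⬝ᵥ g) * Real.sqrt (a ⬝ᵥ a)) = Real.sqrt 2 / 2 ∧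
        (0 : ℝ) < Real.sqrt 2 / 2) ∧
      (g ⬝ᵥ S.mulVec a = -(1 / 2) ∧ (-(1 / 2) : ℝ) < 0) := by
  intro W1 W2 a g S
  have h1 : (1 - W1 * W2) = !![16/7, -6/7; -6/7, 4/7] := by
    show (1 : Matrix (Fin 2) (Fin 2) ℝ) - 1 * (((1:ℝ)/7) • !![-9, 6; 6, 3]) = _
    rw [one_mul]
    ext i j
    fin_cases i <;> fin_cases j <;>
      simp [Matrix.one_apply] <;> norm_num
  have hs2 : Real.sqrt 2 * Real.sqrt 2 = 2 := Real.mul_self_sqrt (by norm_num)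
  refine ⟨?_, ⟨?_, ?_⟩, ?_, by norm_num⟩
  · rw [h1, Matrix.det_fin_two_of]
    norm_num
  · show ((![1,0] : Fin 2 → ℝ) ⬝ᵥ ![1,-1]) / (Real.sqrt (![1,0] ⬝ᵥ ![1,0]) * Real.sqrt ((![1,-1] : Fin 2 → ℝ) ⬝ᵥ ![1,-1])) = _
    simp [dotProduct, Fin.sum_univ_two]
    rw [show (1:ℝ)+1 = 2 by norm_num, inv_eq_one_div,
      div_eq_div_iff (by positivity) (by norm_num), one_mul]
    exact hs2.symm
  · positivity
  · have hS : S = !![1, 3/2; 3/2, 4] := by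
      rw [show S = (1 - W1 * W2)⁻¹ from rfl, h1]
      rw [Matrix.inv_def, Matrix.adjugate_fin_two, Matrix.det_fin_two_of]
      ext i j
      fin_cases i <;> fin_cases j <;> norm_num
    rw [hS]
    show (![1,0] : Fin 2 → ℝ) ⬝ᵥ (!![1, 3/2; 3/2, 4]).mulVec ![1,-1] = _
    simp [dotProduct, Matrix.mulVec, Fin.sum_univ_two]
    norm_num
end

section
/- Let σ: R^K → R^K be the softmax function, σ(x)_i = e^{x_i}/Σ_j e^{x_j}. Then σ is (1/2)-Lipschitz with respect to the ℓ1 norm: Σ_i |σ(x)_i − σ(y)_i| ≤ (1/2) Σ_i |x_i − y_i| for all x, y ∈ R^K. -/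
/-!
Along the segment `t ↦ y + t • (x - y)` the softmax vector `p(t)` has derivative
`p'ᵢ = pᵢ (dᵢ - ⟨p, d⟩)` with `d = x - y`. For any (sub-)probability vector `p`, separating the
`i`-th term of `⟨p, d⟩` gives `|dᵢ - ⟨p, d⟩| ≤ (1 - 2 pᵢ) |dᵢ| + ∑ⱼ pⱼ |dⱼ|`, hence
`∑ᵢ pᵢ |dᵢ - ⟨p, d⟩| ≤ 2 ∑ᵢ pᵢ (1 - pᵢ) |dᵢ| ≤ ‖d‖₁ / 2` since `pᵢ (1 - pᵢ) ≤ 1/4`.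
The mean value inequality in `ℓ¹` then bounds `‖p(1) - p(0)‖₁` by `‖d‖₁ / 2`.
-/

open Finset Set

theorem abs_sub_sum_mul_le {ι : Type*} [Fintype ι] [DecidableEq ι] {p : ι → ℝ}
    (hp : ∀ i, 0 ≤ p i) (hp_sum : ∑ i, p i ≤ 1) (d : ι → ℝ) (i : ι) :
    |d i - ∑ j, p j * d j| ≤ (1 - 2 * p i) * |d i| + ∑ j, p j * |d j| := by
  have hpi : p i ≤ 1 := (single_le_sum (fun j _ => hp j) (mem_univ i)).trans hp_sum
  have hrest : |∑ j ∈ univ.erase i, p j * d j| ≤ ∑ j ∈ univ.erase i, p j * |d j| :=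
    (abs_sum_le_sum_abs _ _).trans_eq <|
      sum_congr rfl fun j _ => by rw [abs_mul, abs_of_nonneg (hp j)]
  rw [← add_sum_erase _ _ (mem_univ i), ← add_sum_erase _ _ (mem_univ i)]
  calc |d i - (p i * d i + ∑ j ∈ univ.erase i, p j * d j)|
      = |(1 - p i) * d i - ∑ j ∈ univ.erase i, p j * d j| := by ring_nf
    _ ≤ |(1 - p i) * d i| + |∑ j ∈ univ.erase i, p j * d j| := abs_sub _ _
    _ ≤ (1 - p i) * |d i| + ∑ j ∈ univ.erase i, p j * |d j| := by
        rw [abs_mul, abs_of_nonneg (sub_nonneg.2 hpi)]; gcongr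
    _ = _ := by ring

theorem sum_mul_abs_sub_sum_mul_le {ι : Type*} [Fintype ι] {p : ι → ℝ}
    (hp : ∀ i, 0 ≤ p i) (hp_sum : ∑ i, p i ≤ 1) (d : ι → ℝ) :
    ∑ i, p i * |d i - ∑ j, p j * d j| ≤ (1 / 2) * ∑ i, |d i| := by
  classical
  set A := ∑ j, p j * |d j|
  have hA : 0 ≤ A := sum_nonneg fun j _ => mul_nonneg (hp j) (abs_nonneg _)
  calc ∑ i, p i * |d i - ∑ j, p j * d j|
      ≤ ∑ i, p i * ((1 - 2 * p i) * |d i| + A) := by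
        gcongr with i
        · exact hp i
        · exact abs_sub_sum_mul_le hp hp_sum d i
    _ = ∑ i, p i * (1 - 2 * p i) * |d i| + (∑ i, p i) * A := by
        rw [sum_mul, ← sum_add_distrib]; exact sum_congr rfl fun i _ => by ring
    _ ≤ ∑ i, p i * (1 - 2 * p i) * |d i| + A := by
        gcongr; exact mul_le_of_le_one_left hA hp_sum
    _ = ∑ i, 2 * (p i * (1 - p i)) * |d i| := by
        simp only [A, ← sum_add_distrib]; exact sum_congr rfl fun i _ => by ring
    _ ≤ ∑ i, 2 * (1 / 4) * |d i| := by
        gcongr with i; nlinarith [sq_nonneg (p i - 1 / 2)]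
    _ = (1 / 2) * ∑ i, |d i| := by rw [mul_sum]; norm_num

theorem sum_abs_sub_le_of_sum_abs_deriv_le {ι : Type*} [Fintype ι] {f f' : ι → ℝ → ℝ}
    {C a b : ℝ} (hab : a ≤ b)
    (hf : ∀ i, ∀ t ∈ Icc a b, HasDerivWithinAt (f i) (f' i t) (Icc a b) t)
    (bound : ∀ t ∈ Ico a b, ∑ i, |f' i t| ≤ C) :
    ∑ i, |f i b - f i a| ≤ C * (b - a) := by
  -- pairing with the signs of the increments reduces the `ℓ¹` norm to a scalar function
  set ε : ι → ℝ := fun i => SignType.sign (f i b - f i a)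
  have hε : ∀ i, |ε i| ≤ 1 := fun i => by
    simp only [ε]; cases SignType.sign (f i b - f i a) <;> simp
  have hderiv : ∀ t ∈ Ico a b, ‖∑ i, ε i * f' i t‖ ≤ C := fun t ht =>
    calc ‖∑ i, ε i * f' i t‖ ≤ ∑ i, |ε i * f' i t| := abs_sum_le_sum_abs _ _
      _ ≤ ∑ i, |f' i t| := sum_le_sum fun i _ => by
          rw [abs_mul]; exact mul_le_of_le_one_left (abs_nonneg _) (hε i)
      _ ≤ C := bound t ht
  have hmvt := norm_image_sub_le_of_norm_deriv_le_segment' (f := fun t => ∑ i, ε i * f i t)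
    (fun t ht => HasDerivWithinAt.fun_sum fun i _ => (hf i t ht).const_mul (ε i))
    hderiv b (right_mem_Icc.2 hab)
  calc ∑ i, |f i b - f i a| = ∑ i, ε i * f i b - ∑ i, ε i * f i a := by
        rw [← sum_sub_distrib]
        exact sum_congr rfl fun i _ => by rw [← mul_sub, sign_mul_self]
    _ ≤ C * (b - a) := (le_abs_self _).trans hmvt

noncomputable def softmax {ι : Type*} [Fintype ι] (x : ι → ℝ) (i : ι) : ℝ :=
  Real.exp (x i) / ∑ j, Real.exp (x j)

theorem softmax_nonneg {ι : Type*} [Fintype ι] (x : ι → ℝ) (i : ι) : 0 ≤ softmax x i := by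
  unfold softmax; positivity

theorem sum_softmax_le_one {ι : Type*} [Fintype ι] (x : ι → ℝ) : ∑ i, softmax x i ≤ 1 := by
  simp only [softmax, ← sum_div]; exact div_self_le_one _

theorem HasDerivAt.softmax {ι : Type*} [Fintype ι] {x : ℝ → ι → ℝ} {x' : ι → ℝ} {t : ℝ}
    (hx : ∀ j, HasDerivAt (fun s => x s j) (x' j) t) (i : ι) :
    HasDerivAt (fun s => softmax (x s) i)
      (softmax (x t) i * (x' i - ∑ j, softmax (x t) j * x' j)) t := by
  have hS : HasDerivAt (fun s => ∑ j, Real.exp (x s j)) (∑ j, Real.exp (x t j) * x' j) t :=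
    HasDerivAt.fun_sum fun j _ => (hx j).exp
  have hS_pos : 0 < ∑ j, Real.exp (x t j) := sum_pos (fun j _ => Real.exp_pos _) ⟨i, mem_univ i⟩
  refine ((hx i).exp.div hS hS_pos.ne').congr_deriv ?_
  simp only [_root_.softmax, div_mul_eq_mul_div, ← sum_div]
  field_simp

/-- Softmax is `1/2`-Lipschitz with respect to the `ℓ1` norm. -/
theorem softmax_l1_lipschitz
    {K : ℕ} (x y : Fin K → ℝ) :
    ∑ i, |Real.exp (x i) / ∑ j, Real.exp (x j) -
          Real.exp (y i) / ∑ j, Real.exp (y j)| ≤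
      (1 / 2) * ∑ i, |x i - y i| := by
  set d := fun i => x i - y i
  set p := fun t => softmax fun j => y j + t * d j
  have hline : ∀ t j, HasDerivAt (fun s => y j + s * d j) (d j) t := fun t j => by
    simpa using ((hasDerivAt_id t).mul_const (d j)).const_add (y j)
  have hbound : ∀ t, ∑ i, |p t i * (d i - ∑ j, p t j * d j)| ≤ (1 / 2) * ∑ i, |d i| := fun t => by
    simp only [abs_mul, abs_of_nonneg (softmax_nonneg _ _), p]
    exact sum_mul_abs_sub_sum_mul_le (softmax_nonneg _) (sum_softmax_le_one _) d
  have h := sum_abs_sub_le_of_sum_abs_deriv_le zero_le_one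
    (fun i t _ => (HasDerivAt.softmax (hline t) i).hasDerivWithinAt)
    (fun t _ => hbound t)
  simpa [p, d, softmax] using h
end
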